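/- arXiv:2302.08424 — 5 statements merged into one kernel-verified Lean document; each statement's English description precedes it below -/
import Mathlib

section
/- For the newsvendor loss with parameters c_o, c_u > 0 normalized so c_o + c_u = 1 and q = c_u, for any distribution F on [0,1] with cdf F, the minimal expected loss satisfies min_{a∈[0,1]} L(a,F) = ∫₀¹ min{(1−q)·F(z), q·(1−F(z))} dz. -/
/-!
By Fubini, `E (a - y)⁺ = ∫_{z < a} F z dz` and `E (y - a)⁺ = ∫_{z ≥ a} (1 - F z) dz`, so the
expected loss of the order `a` is `∫₀¹ levelCost a z dz`, where the layer `z` costs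
`(1 - q) F z` if `z < a` and `q (1 - F z)` otherwise. This integrand always dominates
`min ((1 - q) F z) (q (1 - F z))`, and equals it at every `z` when `a` is the `q`-quantile of `F`
(the least `a` with `q ≤ F a`, which exists by right continuity), because
`(1 - q) F z ≤ q (1 - F z)` exactly when `F z ≤ q`.
-/

open MeasureTheory Set ProbabilityTheory

section LayerCake

variable {μ : Measure ℝ} [SFinite μ]

theorem lintegral_ofReal_sub_eq_setLIntegral_measure_Iic (a : ℝ) :
    ∫⁻ y, ENNReal.ofReal (a - y) ∂μ = ∫⁻ z in Iio a, μ (Iic z) := by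
  have hS : MeasurableSet {p : ℝ × ℝ | p.1 ≤ p.2 ∧ p.2 < a} :=
    (measurableSet_le measurable_fst measurable_snd).inter
      (measurableSet_lt measurable_snd measurable_const)
  calc ∫⁻ y, ENNReal.ofReal (a - y) ∂μ = ∫⁻ y, volume (Ico y a) ∂μ := by
        simp only [Real.volume_Ico]
    _ = μ.prod volume {p : ℝ × ℝ | p.1 ≤ p.2 ∧ p.2 < a} := (Measure.prod_apply hS).symm
    _ = ∫⁻ z, μ {y | y ≤ z ∧ z < a} := Measure.prod_apply_symm hS
    _ = ∫⁻ z in Iio a, μ (Iic z) := by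
        rw [← lintegral_indicator measurableSet_Iio]
        congr with z
        by_cases hz : z < a <;> simp [hz, Iic]

theorem lintegral_ofReal_sub_eq_setLIntegral_measure_Ioi (a : ℝ) :
    ∫⁻ y, ENNReal.ofReal (y - a) ∂μ = ∫⁻ z in Ici a, μ (Ioi z) := by
  have hS : MeasurableSet {p : ℝ × ℝ | a ≤ p.2 ∧ p.2 < p.1} :=
    (measurableSet_le measurable_const measurable_snd).inter
      (measurableSet_lt measurable_snd measurable_fst)
  calc ∫⁻ y, ENNReal.ofReal (y - a) ∂μ = ∫⁻ y, volume (Ico a y) ∂μ := by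
        simp only [Real.volume_Ico]
    _ = μ.prod volume {p : ℝ × ℝ | a ≤ p.2 ∧ p.2 < p.1} := (Measure.prod_apply hS).symm
    _ = ∫⁻ z, μ {y | a ≤ z ∧ z < y} := Measure.prod_apply_symm hS
    _ = ∫⁻ z in Ici a, μ (Ioi z) := by
        rw [← lintegral_indicator measurableSet_Ici]
        congr with z
        by_cases hz : a ≤ z <;> simp [hz, Ioi]

end LayerCake

section Support

variable {μ : Measure ℝ} {l u : ℝ}

theorem measure_Iic_eq_zero_of_lt (hμ : μ (Icc l u)ᶜ = 0) {z : ℝ} (hz : z < l) :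
    μ (Iic z) = 0 :=
  measure_mono_null (fun _ hy => fun h => (hy.trans_lt hz).not_ge h.1) hμ

theorem measure_Ioi_eq_zero_of_le (hμ : μ (Icc l u)ᶜ = 0) {z : ℝ} (hz : u ≤ z) :
    μ (Ioi z) = 0 :=
  measure_mono_null (fun _ hy => fun h => (hz.trans_lt hy).not_ge h.2) hμ

theorem lintegral_newsvendorLoss [SFinite μ] {co cu a : ℝ} (hco : 0 ≤ co) (hcu : 0 ≤ cu)
    (hμ : μ (Icc l u)ᶜ = 0) (ha : a ∈ Icc l u) :
    ∫⁻ y, ENNReal.ofReal (co * max (a - y) 0 + cu * max (y - a) 0) ∂μ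
      = ∫⁻ z in Icc l u,
          if z < a then ENNReal.ofReal co * μ (Iic z) else ENNReal.ofReal cu * μ (Ioi z) := by
  have hIic : Measurable fun z => μ (Iic z) :=
    Monotone.measurable fun _ _ h => measure_mono (Iic_subset_Iic.2 h)
  have hsplit : ∀ y, ENNReal.ofReal (co * max (a - y) 0 + cu * max (y - a) 0)
      = ENNReal.ofReal co * ENNReal.ofReal (a - y)
        + ENNReal.ofReal cu * ENNReal.ofReal (y - a) := by
    intro y
    rw [ENNReal.ofReal_add (by positivity) (by positivity), ENNReal.ofReal_mul hco,
      ENNReal.ofReal_mul hcu]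
    simp [ENNReal.ofReal_max]
  simp_rw [hsplit]
  rw [lintegral_add_left (by fun_prop), lintegral_const_mul _ (by fun_prop),
    lintegral_const_mul _ (by fun_prop), lintegral_ofReal_sub_eq_setLIntegral_measure_Iic,
    lintegral_ofReal_sub_eq_setLIntegral_measure_Ioi]
  rw [← lintegral_const_mul' _ _ ENNReal.ofReal_ne_top,
    ← lintegral_const_mul' _ _ ENNReal.ofReal_ne_top, ← lintegral_indicator measurableSet_Iio,
    ← lintegral_indicator measurableSet_Ici, ← lintegral_indicator measurableSet_Icc,
    ← lintegral_add_left ((hIic.const_mul _).indicator measurableSet_Iio)]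
  congr with z
  by_cases hz : z ∈ Icc l u
  · by_cases hza : z < a <;> simp [hz, hza]
  rcases not_and_or.1 hz with hzl | hzu
  · have hza : z < a := (not_le.1 hzl).trans_le ha.1
    simp [hz, hza, measure_Iic_eq_zero_of_lt hμ (not_le.1 hzl)]
  · have haz : a ≤ z := ha.2.trans (not_le.1 hzu).le
    simp [hz, haz, not_lt.2 haz, measure_Ioi_eq_zero_of_le hμ (not_le.1 hzu).le]

end Support

theorem ofReal_one_sub_cdf (μ : Measure ℝ) [IsProbabilityMeasure μ] (x : ℝ) :
    ENNReal.ofReal (1 - cdf μ x) = μ (Ioi x) := by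
  rw [ENNReal.ofReal_sub _ (cdf_nonneg μ x), ENNReal.ofReal_one, ofReal_cdf,
    ← prob_compl_eq_one_sub measurableSet_Iic, compl_Iic]

theorem StieltjesFunction.exists_le_iff_le (f : StieltjesFunction ℝ) {q : ℝ}
    (hne : {z | q ≤ f z}.Nonempty) (hbdd : BddBelow {z | q ≤ f z}) :
    ∃ a, ∀ z, q ≤ f z ↔ a ≤ z := by
  set a := sInf {z | q ≤ f z}
  have hqa : q ≤ f a := by
    refine ge_of_tendsto ((f.right_continuous a).tendsto.mono_left
      (nhdsWithin_mono a Ioi_subset_Ici_self)) ?_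
    filter_upwards [self_mem_nhdsWithin] with z hz
    obtain ⟨s, hs, hsz⟩ := exists_lt_of_csInf_lt hne hz
    exact hs.trans (f.mono hsz.le)
  exact ⟨a, fun z => ⟨fun hz => csInf_le hbdd hz, fun hz => hqa.trans (f.mono hz)⟩⟩

theorem exists_mem_Icc_le_cdf_iff_le {μ : Measure ℝ} [IsProbabilityMeasure μ] {l u q : ℝ}
    (hμ : μ (Icc l u)ᶜ = 0) (hq0 : 0 < q) (hq1 : q ≤ 1) :
    ∃ a ∈ Icc l u, ∀ z, q ≤ cdf μ z ↔ a ≤ z := by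
  have hl : ∀ z, q ≤ cdf μ z → l ≤ z := by
    refine fun z hz => not_lt.1 fun hzl => ?_
    have h := ofReal_cdf μ z ▸ measure_Iic_eq_zero_of_lt hμ hzl
    linarith [ENNReal.ofReal_eq_zero.1 h]
  have hu : q ≤ cdf μ u := by
    have h := ofReal_one_sub_cdf μ u ▸ measure_Ioi_eq_zero_of_le hμ le_rfl
    linarith [ENNReal.ofReal_eq_zero.1 h]
  obtain ⟨a, ha⟩ := (cdf μ).exists_le_iff_le ⟨u, hu⟩ ⟨l, hl⟩
  exact ⟨a, ⟨hl a ((ha a).2 le_rfl), (ha u).1 hu⟩, ha⟩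

/-- The expected cost contributed by the layer `[z, z + dz]` of an order `a`: it is overstocked
with probability `F z` when `z < a` and understocked with probability `1 - F z` otherwise. -/
noncomputable def levelCost (co cu : ℝ) (F : ℝ → ℝ) (a z : ℝ) : ℝ :=
  if z < a then co * F z else cu * (1 - F z)

section LevelCost

variable {co cu a : ℝ} {F : ℝ → ℝ}

theorem measurable_levelCost (hF : Measurable F) : Measurable (levelCost co cu F a) :=
  Measurable.ite measurableSet_Iio (hF.const_mul co) ((measurable_const.sub hF).const_mul cu)

theorem levelCost_nonneg (hco : 0 ≤ co) (hcu : 0 ≤ cu) {z : ℝ} (h0 : 0 ≤ F z) (h1 : F z ≤ 1) :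
    0 ≤ levelCost co cu F a z := by
  unfold levelCost
  split_ifs <;> nlinarith

theorem min_le_levelCost (z : ℝ) : min (co * F z) (cu * (1 - F z)) ≤ levelCost co cu F a z := by
  unfold levelCost
  split_ifs
  exacts [min_le_left _ _, min_le_right _ _]

theorem levelCost_eq_min_of_le_iff {q : ℝ} (hF : ∀ z, q ≤ F z ↔ a ≤ z) (z : ℝ) :
    levelCost (1 - q) q F a z = min ((1 - q) * F z) (q * (1 - F z)) := by
  unfold levelCost
  split_ifs with hza
  · have := (hF z).not.2 (not_le.2 hza)
    exact (min_eq_left (by nlinarith)).symm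
  · have := (hF z).2 (not_lt.1 hza)
    exact (min_eq_right (by nlinarith)).symm

theorem intervalIntegrable_levelCost_cdf (hco : 0 ≤ co) (hcu : 0 ≤ cu) (μ : Measure ℝ)
    [IsProbabilityMeasure μ] (l u : ℝ) :
    IntervalIntegrable (levelCost co cu (cdf μ) a) volume l u := by
  refine (intervalIntegrable_const (c := co + cu)).mono_fun'
    (measurable_levelCost (monotone_cdf μ).measurable).aestronglyMeasurable
    (ae_of_all _ fun z => ?_)
  have h0 := cdf_nonneg μ z
  have h1 := cdf_le_one μ z
  simp only [Real.norm_of_nonneg (levelCost_nonneg hco hcu h0 h1)]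
  unfold levelCost
  split_ifs <;> nlinarith

end LevelCost

theorem integral_newsvendorLoss {μ : Measure ℝ} [IsProbabilityMeasure μ] {co cu l u a : ℝ}
    (hco : 0 ≤ co) (hcu : 0 ≤ cu) (hμ : μ (Icc l u)ᶜ = 0) (ha : a ∈ Icc l u) :
    ∫ y, (co * max (a - y) 0 + cu * max (y - a) 0) ∂μ
      = ∫ z in l..u, levelCost co cu (cdf μ) a z := by
  have hmeas := measurable_levelCost (co := co) (cu := cu) (a := a) (monotone_cdf μ).measurable
  rw [intervalIntegral.integral_of_le (ha.1.trans ha.2), ← integral_Icc_eq_integral_Ioc,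
    integral_eq_lintegral_of_nonneg_ae (ae_of_all _ fun y => by positivity) (by fun_prop),
    integral_eq_lintegral_of_nonneg_ae
      (ae_of_all _ fun z => levelCost_nonneg hco hcu (cdf_nonneg μ z) (cdf_le_one μ z))
      hmeas.aestronglyMeasurable,
    lintegral_newsvendorLoss hco hcu hμ ha]
  refine congrArg _ (setLIntegral_congr_fun measurableSet_Icc fun z _ => ?_)
  unfold levelCost
  split_ifs
  · rw [ENNReal.ofReal_mul hco, ofReal_cdf]
  · rw [ENNReal.ofReal_mul hcu, ofReal_one_sub_cdf]

theorem stmt1 (co cu q : ℝ) (hco : 0 < co) (hcu : 0 < cu) (hsum : co + cu = 1)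
    (hq : q = cu)
    (F : Measure ℝ) [IsProbabilityMeasure F] (hF : F (Icc (0:ℝ) 1)ᶜ = 0) :
    sInf ((fun a => ∫ y, (co * max (a - y) 0 + cu * max (y - a) 0) ∂F) '' Icc (0:ℝ) 1)
      = ∫ z in (0:ℝ)..1,
          min ((1 - q) * (F (Iic z)).toReal) (q * (1 - (F (Iic z)).toReal)) := by
  obtain rfl : co = 1 - q := by linarith
  subst hq
  simp only [← measureReal_def, ← cdf_eq_real]
  obtain ⟨a, ha, hquantile⟩ := exists_mem_Icc_le_cdf_iff_le hF hcu (by linarith)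
  simp only [← levelCost_eq_min_of_le_iff hquantile]
  refine IsLeast.csInf_eq ⟨⟨a, ha, integral_newsvendorLoss hco.le hcu.le hF ha⟩, ?_⟩
  rintro _ ⟨b, hb, rfl⟩
  dsimp only
  rw [integral_newsvendorLoss hco.le hcu.le hF hb]
  refine intervalIntegral.integral_mono_on zero_le_one
    (intervalIntegrable_levelCost_cdf hco.le hcu.le F 0 1)
    (intervalIntegrable_levelCost_cdf hco.le hcu.le F 0 1) fun z _ => ?_
  rw [levelCost_eq_min_of_le_iff hquantile]
  exact min_le_levelCost z
end

section
/- Let G be a probability distribution on [0,1] (representing a randomized action) and F a distribution on [0,1]. Then the expected newsvendor loss satisfies E_{a∼G}[L(a,F)] = (c_u + c_o)·∫₀^∞ [Ḡ(z)·(F(z) − q) + q·(1 − F(z))] dz, where Ḡ(z) = 1 − G(z) and q = c_u/(c_o + c_u). -/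
open MeasureTheory Set

/-!
Layer-cake form of the newsvendor loss: for `a, y ∈ [0, 1]`,
`co (a - y)⁺ + cu (y - a)⁺ = ∫₀¹ (co 1{y ≤ z < a} + cu 1{a ≤ z < y}) dz`.
Integrating against `G ⊗ F` and exchanging the order of integration (everything is bounded on a
finite measure space), the inner integral at level `z` is
`co F(z) (1 - G(z)) + cu G(z) (1 - F(z))`, which equals
`(co + cu) [(1 - G(z)) (F(z) - q) + q (1 - F(z))]` by the choice of `q`. Above `z = 1` the
integrand vanishes, so the integral over `[0, 1)` is the one over `(0, ∞)`.
-/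

lemma measureReal_Iic_eq_one {μ : Measure ℝ} [IsProbabilityMeasure μ] {s : Set ℝ}
    (hμ : μ sᶜ = 0) {z : ℝ} (hs : s ⊆ Iic z) : μ.real (Iic z) = 1 := by
  rw [measureReal_def, (prob_compl_eq_zero_iff measurableSet_Iic).1
    (measure_mono_null (compl_subset_compl.2 hs) hμ), ENNReal.toReal_one]

lemma setIntegral_Ioi_eq_setIntegral_Ico {f : ℝ → ℝ} {a b : ℝ}
    (hf : ∀ z, b ≤ z → f z = 0) : ∫ z in Ioi a, f z = ∫ z in Ico a b, f z := by
  rw [integral_Ico_eq_integral_Ioo]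
  exact setIntegral_eq_of_subset_of_forall_sdiff_eq_zero measurableSet_Ioi Ioo_subset_Ioi_self
    fun z hz => hf z <| not_lt.1 fun hzb => hz.2 ⟨hz.1, hzb⟩

namespace Newsvendor

/-- `p = (a, y)` pairs the action with the demand: the overage cost accrues at the levels
`y ≤ z < a`, the underage cost at `a ≤ z < y`. -/
noncomputable def lossDensity (co cu : ℝ) (p : ℝ × ℝ) (z : ℝ) : ℝ :=
  co * (Ioi z ×ˢ Iic z).indicator 1 p + cu * (Iic z ×ˢ Ioi z).indicator 1 p

variable (co cu : ℝ)

lemma lossDensity_apply (a y z : ℝ) :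
    lossDensity co cu (a, y) z = co * (Ico y a).indicator 1 z + cu * (Ico a y).indicator 1 z := by
  simp only [lossDensity, indicator_apply, mem_prod, mem_Ioi, mem_Iic, mem_Ico, Pi.one_apply,
    and_comm]

lemma setIntegral_Ico_lossDensity {a y : ℝ} (ha : a ∈ Icc (0 : ℝ) 1) (hy : y ∈ Icc (0 : ℝ) 1) :
    ∫ z in Ico 0 1, lossDensity co cu (a, y) z = co * max (a - y) 0 + cu * max (y - a) 0 := by
  have hIco {b c : ℝ} (hb : b ∈ Icc (0 : ℝ) 1) (hc : c ∈ Icc (0 : ℝ) 1) :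
      ∫ z in Ico 0 1, (Ico b c).indicator 1 z = max (c - b) 0 := by
    rw [integral_indicator_one measurableSet_Ico, measureReal_restrict_apply measurableSet_Ico,
      inter_eq_left.2 (Ico_subset_Ico hb.1 hc.2), Real.volume_real_Ico]
  have hint {b c : ℝ} : Integrable ((Ico b c).indicator 1) (volume.restrict (Ico (0 : ℝ) 1)) :=
    (integrable_const (1 : ℝ)).indicator measurableSet_Ico
  simp only [lossDensity_apply]
  rw [integral_add (hint.const_mul co) (hint.const_mul cu), integral_const_mul, integral_const_mul,
    hIco hy ha, hIco ha hy]

lemma measurable_lossDensity : Measurable (Function.uncurry (lossDensity co cu)) := by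
  have hover : MeasurableSet {q : (ℝ × ℝ) × ℝ | q.1 ∈ Ioi q.2 ×ˢ Iic q.2} :=
    (measurableSet_lt measurable_snd (measurable_fst.comp measurable_fst)).inter
      (measurableSet_le (measurable_snd.comp measurable_fst) measurable_snd)
  have hunder : MeasurableSet {q : (ℝ × ℝ) × ℝ | q.1 ∈ Iic q.2 ×ˢ Ioi q.2} :=
    (measurableSet_le (measurable_fst.comp measurable_fst) measurable_snd).inter
      (measurableSet_lt measurable_snd (measurable_snd.comp measurable_fst))
  have hind {S : Set ((ℝ × ℝ) × ℝ)} (hS : MeasurableSet S) :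
      Measurable (S.indicator (1 : (ℝ × ℝ) × ℝ → ℝ)) := measurable_const.indicator hS
  exact ((hind hover).const_mul co).add ((hind hunder).const_mul cu)

lemma norm_lossDensity_le (p : ℝ × ℝ) (z : ℝ) : ‖lossDensity co cu p z‖ ≤ |co| + |cu| := by
  have hind (S : Set (ℝ × ℝ)) : |S.indicator (1 : ℝ × ℝ → ℝ) p| ≤ 1 := by
    by_cases hp : p ∈ S <;> simp [hp]
  calc ‖lossDensity co cu p z‖
      ≤ |co| * |(Ioi z ×ˢ Iic z).indicator 1 p| + |cu| * |(Iic z ×ˢ Ioi z).indicator 1 p| := by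
        rw [Real.norm_eq_abs, ← abs_mul, ← abs_mul]; exact abs_add_le _ _
    _ ≤ |co| * 1 + |cu| * 1 := by gcongr <;> exact hind _
    _ = |co| + |cu| := by ring

lemma integrable_lossDensity (μ : Measure (ℝ × ℝ)) (ν : Measure ℝ) [IsFiniteMeasure μ]
    [IsFiniteMeasure ν] : Integrable (Function.uncurry (lossDensity co cu)) (μ.prod ν) :=
  Integrable.of_bound (measurable_lossDensity co cu).aestronglyMeasurable _
    (ae_of_all _ fun q => norm_lossDensity_le co cu q.1 q.2)

lemma integral_lossDensity_prod (G F : Measure ℝ) [IsFiniteMeasure G] [IsFiniteMeasure F]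
    (z : ℝ) : ∫ p, lossDensity co cu p z ∂(G.prod F)
      = co * G.real (Ioi z) * F.real (Iic z) + cu * G.real (Iic z) * F.real (Ioi z) := by
  have hint {s t : Set ℝ} (hs : MeasurableSet s) (ht : MeasurableSet t) :
      Integrable ((s ×ˢ t).indicator (1 : ℝ × ℝ → ℝ)) (G.prod F) :=
    (integrable_const (1 : ℝ)).indicator (hs.prod ht)
  have hprod {s t : Set ℝ} (hs : MeasurableSet s) (ht : MeasurableSet t) :
      ∫ p, (s ×ˢ t).indicator 1 p ∂(G.prod F) = G.real s * F.real t := by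
    rw [integral_indicator_one (hs.prod ht), measureReal_prod_prod]
  simp only [lossDensity]
  rw [integral_add ((hint measurableSet_Ioi measurableSet_Iic).const_mul co)
    ((hint measurableSet_Iic measurableSet_Ioi).const_mul cu), integral_const_mul,
    integral_const_mul, hprod measurableSet_Ioi measurableSet_Iic,
    hprod measurableSet_Iic measurableSet_Ioi, mul_assoc, mul_assoc]

lemma integral_integral_loss_eq_setIntegral_cdf (F G : Measure ℝ) [IsFiniteMeasure F]
    [IsFiniteMeasure G]
    (hF : ∀ᵐ y ∂F, y ∈ Icc (0 : ℝ) 1) (hG : ∀ᵐ a ∂G, a ∈ Icc (0 : ℝ) 1) :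
    ∫ a, ∫ y, (co * max (a - y) 0 + cu * max (y - a) 0) ∂F ∂G
      = ∫ z in Ico 0 1,
          (co * G.real (Ioi z) * F.real (Iic z) + cu * G.real (Iic z) * F.real (Ioi z)) := by
  set ν := volume.restrict (Ico (0 : ℝ) 1)
  have hk := integrable_lossDensity co cu (G.prod F) ν
  calc ∫ a, ∫ y, (co * max (a - y) 0 + cu * max (y - a) 0) ∂F ∂G
      = ∫ a, ∫ y, ∫ z, lossDensity co cu (a, y) z ∂ν ∂F ∂G :=
        integral_congr_ae <| hG.mono fun a ha => integral_congr_ae <| hF.mono fun y hy =>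
          (setIntegral_Ico_lossDensity co cu ha hy).symm
    _ = ∫ p, ∫ z, lossDensity co cu p z ∂ν ∂(G.prod F) :=
        (integral_prod _ hk.integral_prod_left).symm
    _ = ∫ z, ∫ p, lossDensity co cu p z ∂(G.prod F) ∂ν := integral_integral_swap hk
    _ = _ := by simp only [integral_lossDensity_prod]

end Newsvendor

theorem stmt3 (co cu : ℝ) (hco : 0 < co) (hcu : 0 < cu) (q : ℝ) (hq : q = cu / (co + cu))
    (F G : Measure ℝ) [IsProbabilityMeasure F] [IsProbabilityMeasure G]
    (hF : F (Icc (0:ℝ) 1)ᶜ = 0) (hG : G (Icc (0:ℝ) 1)ᶜ = 0) :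
    ∫ a, (∫ y, (co * max (a - y) 0 + cu * max (y - a) 0) ∂F) ∂G
      = (cu + co) * ∫ z in Ioi (0:ℝ),
          ((1 - (G (Iic z)).toReal) * ((F (Iic z)).toReal - q)
            + q * (1 - (F (Iic z)).toReal)) := by
  have hcdf_one {z : ℝ} (hz : 1 ≤ z) : F.real (Iic z) = 1 ∧ G.real (Iic z) = 1 :=
    ⟨measureReal_Iic_eq_one hF fun _ hx => hx.2.trans hz,
      measureReal_Iic_eq_one hG fun _ hx => hx.2.trans hz⟩
  rw [Newsvendor.integral_integral_loss_eq_setIntegral_cdf co cu F G (ae_iff.2 hF) (ae_iff.2 hG),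
    ← integral_const_mul, setIntegral_Ioi_eq_setIntegral_Ico (b := 1)]
  · refine setIntegral_congr_fun measurableSet_Ico fun z _ => ?_
    simp only [← measureReal_def]
    rw [← compl_Iic, probReal_compl_eq_one_sub measurableSet_Iic,
      probReal_compl_eq_one_sub measurableSet_Iic, hq]
    field_simp
    ring
  · intro z hz
    simp only [← measureReal_def, (hcdf_one hz).1, (hcdf_one hz).2]
    ring
end

section
/- The counting function of any counting policy is monotone: if π : [0,1]^n → [0,1] is a counting policy with counting function κ : {0,1}^n → {0,1}, then for all b, b' ∈ {0,1}^n with b_i ≤ b'_i for all i, we have κ(b) ≤ κ(b'). -/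
/-!
Given `b ≤ b'`, place coordinate `i` at `0` if `b i`, at `1/2` if only `b' i`, and at `1` otherwise.
At threshold `1/4` this point reads `b`, at threshold `3/4` it reads `b'`; since `π y ≤ 1/4` forces
`π y ≤ 3/4`, the counting property gives `κ b → κ b'`.
-/

open Set

theorem counting_le_of_threshold_le {ι α : Type*} [LinearOrder α] {π : (ι → α) → α}
    {κ : (ι → Bool) → Bool} {y : ι → α} {z z' : α} (hzz' : z ≤ z')
    (hz : π y ≤ z ↔ κ (fun i => decide (y i ≤ z)) = true)
    (hz' : π y ≤ z' ↔ κ (fun i => decide (y i ≤ z')) = true) :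
    κ (fun i => decide (y i ≤ z)) ≤ κ (fun i => decide (y i ≤ z')) :=
  Bool.le_iff_imp.mpr fun h => hz'.mp ((hz.mpr h).trans hzz')

theorem exists_unitInterval_thresholds_eq {ι : Type*} {b b' : ι → Bool} (hbb' : ∀ i, b i ≤ b' i) :
    ∃ y : ι → ℝ, (∀ i, y i ∈ Icc (0 : ℝ) 1) ∧
      (fun i => decide (y i ≤ 1 / 4)) = b ∧ (fun i => decide (y i ≤ 3 / 4)) = b' := by
  refine ⟨fun i => if b i then 0 else if b' i then 1 / 2 else 1, fun i => ?_, funext fun i => ?_,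
    funext fun i => ?_⟩ <;>
    cases hb : b i <;> cases hb' : b' i <;> simp_all [Bool.le_iff_imp] <;> norm_num

theorem stmt5 (n : ℕ) (π : (Fin n → ℝ) → ℝ) (κ : (Fin n → Bool) → Bool)
    (hπ : ∀ z ∈ Icc (0:ℝ) 1, ∀ y : Fin n → ℝ, (∀ i, y i ∈ Icc (0:ℝ) 1) →
      (π y ≤ z ↔ κ (fun i => decide (y i ≤ z)) = true))
    (b b' : Fin n → Bool) (hbb' : ∀ i, b i ≤ b' i) : κ b ≤ κ b' := by
  obtain ⟨y, hy, hb, hb'⟩ := exists_unitInterval_thresholds_eq hbb'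
  have h := counting_le_of_threshold_le (π := π) (κ := κ) (by norm_num : (1 / 4 : ℝ) ≤ 3 / 4)
    (hπ (1 / 4) (by norm_num) y hy) (hπ (3 / 4) (by norm_num) y hy)
  rwa [hb, hb'] at h
end

section
/- There exists a weighted ERM policy that is not an order statistic policy. Specifically, for n = 4, c_o = c_u = 1/2, and weights w = (2,1,1,1), the weighted ERM policy π which outputs min{y₂,y₃,y₄} when y₁ is strictly smallest, max{y₂,y₃,y₄} when y₁ is strictly largest, and y₁ otherwise, is not equal to any order statistic policy y ↦ y_{(r),S}. -/
open Set

/-- The `r`-th order statistic with the conventions `y_{(0),S} = 0` and `y_{(r),S} = 1`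
when `r > |S|`. -/
noncomputable def orderStatExt (n : ℕ) (y : Fin n → ℝ) (S : Finset (Fin n)) (r : ℕ) : ℝ :=
  if r = 0 then 0
  else if S.card < r then 1
  else ((S.val.map y).sort (· ≤ ·)).getD (r - 1) 0

/-- The weighted ERM policy for `n = 4`, `c_o = c_u = 1/2` and weights `w = (2,1,1,1)`:
it outputs `min{y₂,y₃,y₄}` when `y₁` is strictly smallest, `max{y₂,y₃,y₄}` when `y₁` is
strictly largest, and `y₁` otherwise. -/
noncomputable def wermEx (y : Fin 4 → ℝ) : ℝ :=
  if ∀ i, i ≠ 0 → y 0 < y i then min (y 1) (min (y 2) (y 3))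
  else if ∀ i, i ≠ 0 → y i < y 0 then max (y 1) (max (y 2) (y 3))
  else y 0

/-!
An order statistic policy only ever outputs `0`, `1` or a coordinate `y i` with `i ∈ S`, and
it is invariant under permutations of the coordinates that preserve `S`. The example policy
outputs `y₂` on `(0, 1/4, 1/2, 3/4)` and `y₁` on `(1/2, 0, 1/4, 3/4)`, which forces `1, 2 ∈ S`
(indices counted from one); but swapping the first two coordinates of the latter vector
changes its output from `1/2` to `1/4`.
-/

lemma List.getD_mem_or_eq_default {α : Type*} (l : List α) (n : ℕ) (d : α) :
    l.getD n d ∈ l ∨ l.getD n d = d := by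
  rw [List.getD_eq_getElem?_getD]
  cases h : l[n]? with
  | none => exact Or.inr rfl
  | some a => exact Or.inl (List.mem_of_getElem? h)

section OrderStatExt

variable {n : ℕ} {y : Fin n → ℝ} {S : Finset (Fin n)} {r : ℕ}

lemma orderStatExt_eq_zero_or_eq_one_or_mem (y : Fin n → ℝ) (S : Finset (Fin n)) (r : ℕ) :
    orderStatExt n y S r = 0 ∨ orderStatExt n y S r = 1 ∨
      ∃ i ∈ S, orderStatExt n y S r = y i := by
  unfold orderStatExt
  split_ifs
  · exact Or.inl rfl
  · exact Or.inr (Or.inl rfl)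
  · rcases List.getD_mem_or_eq_default ((S.val.map y).sort (· ≤ ·)) (r - 1) 0 with h | h
    · obtain ⟨i, hi, hyi⟩ := Multiset.mem_map.1 ((Multiset.mem_sort _).1 h)
      exact Or.inr (Or.inr ⟨i, hi, hyi.symm⟩)
    · exact Or.inl h

lemma mem_of_orderStatExt_eq {k : Fin n} (hk : orderStatExt n y S r = y k) (h0 : y k ≠ 0)
    (h1 : y k ≠ 1) (hinj : ∀ i, y i = y k → i = k) : k ∈ S := by
  rcases orderStatExt_eq_zero_or_eq_one_or_mem y S r with h | h | ⟨i, hi, hyi⟩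
  · exact absurd (hk.symm.trans h) h0
  · exact absurd (hk.symm.trans h) h1
  · rwa [← hinj i (hyi.symm.trans hk)]

lemma orderStatExt_comp_perm (σ : Equiv.Perm (Fin n)) (hσ : ∀ i ∈ S, σ i ∈ S) :
    orderStatExt n (y ∘ σ) S r = orderStatExt n y S r := by
  have hS : S.map σ.toEmbedding = S :=
    Finset.map_eq_of_subset fun _ hi ↦ by
      obtain ⟨j, hj, rfl⟩ := Finset.mem_map.1 hi
      exact hσ j hj
  have hmap : S.val.map (y ∘ σ) = S.val.map y := by
    rw [← Multiset.map_map]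
    congr 1
    simpa using congrArg Finset.val hS
  simp only [orderStatExt, hmap]

lemma orderStatExt_comp_swap {i j : Fin n} (hi : i ∈ S) (hj : j ∈ S) :
    orderStatExt n (y ∘ Equiv.swap i j) S r = orderStatExt n y S r :=
  orderStatExt_comp_perm _ fun k hk ↦ by
    rw [Equiv.swap_apply_def]
    split_ifs <;> assumption

end OrderStatExt

theorem stmt11 :
    ¬ ∃ (S : Finset (Fin 4)) (r : ℕ), r ≤ 5 ∧
      ∀ y : Fin 4 → ℝ, (∀ i, y i ∈ Icc (0:ℝ) 1) → wermEx y = orderStatExt 4 y S r := by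
  rintro ⟨S, r, -, h⟩
  let y : Fin 4 → ℝ := ![0, 1/4, 1/2, 3/4]
  let z : Fin 4 → ℝ := ![1/2, 0, 1/4, 3/4]
  have hz_swap : z ∘ Equiv.swap 0 1 = ![0, 1/2, 1/4, 3/4] := by
    funext i; fin_cases i <;> rfl
  have h1 : (1 : Fin 4) ∈ S := by
    refine mem_of_orderStatExt_eq (y := y) (r := r) ?_ (by norm_num [y]) (by norm_num [y])
      (by intro i; fin_cases i <;> norm_num [y])
    rw [← h y (by intro i; fin_cases i <;> norm_num [y])]
    norm_num [y, wermEx, Fin.forall_fin_succ, Matrix.cons_val_two, Matrix.cons_val_three]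
  have h0 : (0 : Fin 4) ∈ S := by
    refine mem_of_orderStatExt_eq (y := z) (r := r) ?_ (by norm_num [z]) (by norm_num [z])
      (by intro i; fin_cases i <;> norm_num [z])
    rw [← h z (by intro i; fin_cases i <;> norm_num [z])]
    norm_num [z, wermEx, Fin.forall_fin_succ, Matrix.cons_val_two, Matrix.cons_val_three]
  have hswap := h (z ∘ Equiv.swap 0 1) (by rw [hz_swap]; intro i; fin_cases i <;> norm_num)
  rw [orderStatExt_comp_swap h0 h1, ← h z (by intro i; fin_cases i <;> norm_num [z]),
    hz_swap] at hswap
  norm_num [z, wermEx, Fin.forall_fin_succ, Matrix.cons_val_two, Matrix.cons_val_three] at hswap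
end

section
/- (Regret integral representation.) For a separable policy π with function P^π, distributions F (out-of-sample) and H₁,…,H_n on [0,1], with independent samples y_i ∼ H_i, the expected regret satisfies E[L(π(y),F)] − min_a L(a,F) = (c_u+c_o)·∫₀¹ [(1 − P^π(H₁(z),…,H_n(z)))·(F(z) − q) + q·(1 − F(z)) − min{(1−q)·F(z), q·(1−F(z))}] dz, where q = c_u/(c_u+c_o). -/
/-!
The newsvendor loss is a layer-cake integral over thresholds `z ∈ [0,1]`:
`co (a - v)⁺ + cu (v - a)⁺ = ∫₀¹ (co [v ≤ z < a] + cu [a ≤ z < v]) dz`.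
Integrating in `v ∼ F` (Fubini) gives `L(a,F) = ∫₀¹ (co F(z) [z < a] + cu (1 - F(z)) [a ≤ z]) dz`,
and averaging over `a = π(y)` replaces `[a ≤ z]` by `P(π(y) ≤ z) = P^π(H₁(z),…,H_n(z))`.
The integrand of `L(a,F)` is at least `min (co F(z)) (cu (1 - F(z)))` for every `z`, with equality
for all `z` at once when `a` is the `q`-quantile of `F` (right-continuity of `F`), so `min_a L(a,F)`
is the integral of that minimum. Testing separability on point masses shows that `π` maps
`[0,1]ⁿ` to `[0,1]` and is measurable there, which is what Fubini needs.
-/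

open MeasureTheory Set ProbabilityTheory

theorem MeasureTheory.Measure.pi_dirac {ι : Type*} [Fintype ι] {α : ι → Type*}
    [∀ i, MeasurableSpace (α i)] [∀ i, MeasurableSingletonClass (α i)] (x : ∀ i, α i) :
    Measure.pi (fun i => Measure.dirac (x i)) = Measure.dirac x :=
  Measure.pi_eq fun s _ => by
    simpa [Measure.dirac_apply] using Set.indicator_pi_one_apply (M₀ := ENNReal) Finset.univ s x

def IsSeparablePolicy {n : ℕ} (π P : (Fin n → ℝ) → ℝ) : Prop :=
  ∀ H : Fin n → Measure ℝ, (∀ i, IsProbabilityMeasure (H i)) →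
    (∀ i, H i (Icc (0:ℝ) 1)ᶜ = 0) → ∀ z : ℝ,
      ((Measure.pi H) {y | π y ≤ z}).toReal = P (fun i => (H i (Iic z)).toReal)

theorem MeasureTheory.Measure.ae_pi_forall_mem {ι : Type*} [Fintype ι] {α : ι → Type*}
    [∀ i, MeasurableSpace (α i)] (μ : ∀ i, Measure (α i)) [∀ i, SigmaFinite (μ i)]
    {s : ∀ i, Set (α i)} (hs : ∀ i, ∀ᵐ x ∂μ i, x ∈ s i) :
    ∀ᵐ y ∂Measure.pi μ, ∀ i, y i ∈ s i :=
  ae_all_iff.2 fun i => Measure.tendsto_eval_ae_ae (hs i)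

namespace IsSeparablePolicy

variable {n : ℕ} {π P : (Fin n → ℝ) → ℝ}

/-- Separability tested on the point masses `δ_{y i}`. -/
theorem ite_le_eq (hsep : IsSeparablePolicy π P) {y : Fin n → ℝ} (hy : ∀ i, y i ∈ Icc (0:ℝ) 1)
    (z : ℝ) : (if π y ≤ z then 1 else 0) = P (fun i => if y i ≤ z then 1 else 0) := by
  have h := hsep (fun i => Measure.dirac (y i)) (fun _ => inferInstance)
    (fun i => by simp [hy i]) z
  simp only [Measure.pi_dirac, Measure.dirac_apply, indicator_apply, mem_ofPred_eq, mem_Iic,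
    Pi.one_apply, apply_ite ENNReal.toReal, ENNReal.toReal_one, ENNReal.toReal_zero] at h
  exact h

theorem apply_one (hsep : IsSeparablePolicy π P) : P 1 = 1 := by
  have h := hsep.ite_le_eq (y := 0) (fun _ => ⟨le_rfl, zero_le_one⟩) (max 1 (π 0))
  simp only [le_max_right, if_true, Pi.zero_apply, le_max_iff, zero_le_one, true_or] at h
  exact h.symm

theorem apply_zero (hsep : IsSeparablePolicy π P) : P 0 = 0 := by
  have h := hsep.ite_le_eq (y := 0) (fun _ => ⟨le_rfl, zero_le_one⟩) (min (-1) (π 0 - 1))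
  have h1 : ¬ π 0 ≤ min (-1) (π 0 - 1) := fun h => by linarith [min_le_right (-1) (π 0 - 1)]
  have h2 : ¬ (0:ℝ) ≤ min (-1) (π 0 - 1) := fun h => by linarith [min_le_left (-1) (π 0 - 1)]
  simp only [h1, h2, if_false, Pi.zero_apply] at h
  exact h.symm

theorem mem_Icc (hsep : IsSeparablePolicy π P) {y : Fin n → ℝ}
    (hy : ∀ i, y i ∈ Icc (0:ℝ) 1) : π y ∈ Icc (0:ℝ) 1 := by
  constructor
  · by_contra! hneg
    have h := hsep.ite_le_eq hy (π y)
    have hfalse : ∀ i, ¬ y i ≤ π y := fun i => not_le.2 (hneg.trans_le (hy i).1)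
    simp only [le_refl, if_true, hfalse, if_false] at h
    simp [← Pi.zero_def, hsep.apply_zero] at h
  · have h := hsep.ite_le_eq hy 1
    simp only [fun i => (hy i).2, if_true, ← Pi.one_def, hsep.apply_one] at h
    by_contra hgt
    simp [hgt] at h

/-- On the cube, whether `π y ≤ z` only depends on which coordinates of `y` are `≤ z`. -/
theorem measurableSet_le_inter (hsep : IsSeparablePolicy π P) (z : ℝ) :
    MeasurableSet ({y | π y ≤ z} ∩ univ.pi fun _ => Icc (0:ℝ) 1) := by
  let pattern : (Fin n → ℝ) → Fin n → Bool := fun y i => decide (y i ≤ z)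
  have hpattern : Measurable pattern := measurable_pi_lambda pattern fun i =>
    measurable_to_bool <| by
      simpa [pattern, preimage] using measurableSet_le (measurable_pi_apply i) measurable_const
  have hP : Measurable fun y => P fun i => if pattern y i then 1 else 0 :=
    (measurable_of_countable fun b : Fin n → Bool => P fun i => if b i then 1 else 0).comp hpattern
  convert (hP (measurableSet_singleton 1)).inter
    (MeasurableSet.univ_pi fun _ => measurableSet_Icc) using 1
  ext y
  simp only [mem_inter_iff, mem_univ_pi, mem_ofPred_eq, mem_preimage, mem_singleton_iff, pattern,
    decide_eq_true_eq]
  refine and_congr_left fun hy => ?_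
  rw [← hsep.ite_le_eq hy]
  split_ifs <;> simp_all

theorem ae_mem_Icc (hsep : IsSeparablePolicy π P) (H : Fin n → Measure ℝ)
    [∀ i, IsProbabilityMeasure (H i)] (hH : ∀ i, ∀ᵐ x ∂H i, x ∈ Icc (0:ℝ) 1) :
    ∀ᵐ y ∂Measure.pi H, π y ∈ Icc (0:ℝ) 1 :=
  (Measure.ae_pi_forall_mem H hH).mono fun _ hy => hsep.mem_Icc hy

theorem aemeasurable (hsep : IsSeparablePolicy π P) (H : Fin n → Measure ℝ)
    [∀ i, IsProbabilityMeasure (H i)] (hH : ∀ i, ∀ᵐ x ∂H i, x ∈ Icc (0:ℝ) 1) :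
    AEMeasurable π (Measure.pi H) := by
  classical
  let cube := univ.pi fun _ : Fin n => Icc (0:ℝ) 1
  have hcube : MeasurableSet cube := MeasurableSet.univ_pi fun _ => measurableSet_Icc
  refine ⟨cube.piecewise π 0, measurable_of_Iic fun z => ?_, ?_⟩
  · have h := hcube.ite (hsep.measurableSet_le_inter z)
      ((measurableSet_Iic (a := z)).preimage (measurable_const (a := (0:ℝ))))
    convert h using 1
    simp only [cube, piecewise_preimage, Set.ite, inter_assoc, inter_self]
    rfl
  · filter_upwards [Measure.ae_pi_forall_mem H hH] with y hy
    exact (piecewise_eq_of_mem _ _ _ (mem_univ_pi.2 hy)).symm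

end IsSeparablePolicy

theorem loss_eq_setIntegral_Icc {co cu a v : ℝ} (ha : a ∈ Icc (0:ℝ) 1) (hv : v ∈ Icc (0:ℝ) 1) :
    co * max (a - v) 0 + cu * max (v - a) 0 =
      ∫ z in Icc (0:ℝ) 1,
        if z < a then (if v ≤ z then co else 0) else (if z < v then cu else 0) := by
  have hsplit : ∀ z, (if z < a then (if v ≤ z then co else 0) else (if z < v then cu else 0))
      = co * (Ico v a).indicator 1 z + cu * (Ico a v).indicator 1 z := by
    intro z
    simp only [indicator_apply, mem_Ico, Pi.one_apply]
    split_ifs <;> grind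
  have hint : ∀ b c : ℝ, Integrable ((Ico b c).indicator 1) (volume.restrict (Icc (0:ℝ) 1)) :=
    fun b c => (integrable_const (1:ℝ)).indicator measurableSet_Ico
  have hsub : ∀ {b c : ℝ}, b ∈ Icc (0:ℝ) 1 → c ∈ Icc (0:ℝ) 1 → Ico b c ∩ Icc 0 1 = Ico b c :=
    fun hb hc => inter_eq_left.2 (Ico_subset_Icc_self.trans (Icc_subset_Icc hb.1 hc.2))
  simp_rw [hsplit]
  rw [integral_add ((hint v a).const_mul co) ((hint a v).const_mul cu),
    integral_const_mul, integral_const_mul, integral_indicator_one measurableSet_Ico,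
    integral_indicator_one measurableSet_Ico, measureReal_restrict_apply measurableSet_Ico,
    measureReal_restrict_apply measurableSet_Ico, hsub hv ha, hsub ha hv, Real.volume_real_Ico,
    Real.volume_real_Ico]

theorem integral_loss_eq_setIntegral_cdf (co cu : ℝ) {F : Measure ℝ} [IsProbabilityMeasure F]
    (hF : ∀ᵐ v ∂F, v ∈ Icc (0:ℝ) 1) {a : ℝ} (ha : a ∈ Icc (0:ℝ) 1) :
    ∫ v, (co * max (a - v) 0 + cu * max (v - a) 0) ∂F =
      ∫ z in Icc (0:ℝ) 1, if z < a then co * cdf F z else cu * (1 - cdf F z) := by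
  let k : ℝ → ℝ → ℝ := fun v z =>
    if z < a then (if v ≤ z then co else 0) else (if z < v then cu else 0)
  have hk : Integrable (Function.uncurry k) (F.prod (volume.restrict (Icc (0:ℝ) 1))) := by
    refine Integrable.of_bound ?_ (|co| + |cu|) (ae_of_all _ fun p => ?_)
    · exact (Measurable.ite (measurableSet_lt measurable_snd measurable_const)
        (Measurable.ite (measurableSet_le measurable_fst measurable_snd) measurable_const
          measurable_const)
        (Measurable.ite (measurableSet_lt measurable_snd measurable_fst) measurable_const
          measurable_const)).aestronglyMeasurable
    · simp only [k, Function.uncurry]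
      split_ifs <;> simp <;> positivity
  calc ∫ v, (co * max (a - v) 0 + cu * max (v - a) 0) ∂F
      = ∫ v, (∫ z in Icc (0:ℝ) 1, k v z) ∂F :=
        integral_congr_ae (hF.mono fun v hv => loss_eq_setIntegral_Icc ha hv)
    _ = ∫ z in Icc (0:ℝ) 1, ∫ v, k v z ∂F := integral_integral_swap hk
    _ = _ := by
        refine integral_congr_ae (ae_of_all _ fun z => ?_)
        by_cases hz : z < a
        · simp only [k, hz, if_true]
          change ∫ v, (Iic z).indicator (fun _ => co) v ∂F = _
          rw [integral_indicator_const co measurableSet_Iic, cdf_eq_real, smul_eq_mul, mul_comm]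
        · simp only [k, hz, if_false]
          change ∫ v, (Ioi z).indicator (fun _ => cu) v ∂F = _
          rw [integral_indicator_const cu measurableSet_Ioi, cdf_eq_real, smul_eq_mul, mul_comm,
            ← compl_Iic, probReal_compl_eq_one_sub measurableSet_Iic]

theorem integral_ite_lt {α : Type*} [MeasurableSpace α] (μ : Measure α) [IsProbabilityMeasure μ]
    {X : α → ℝ} (hX : Measurable X) (z b c : ℝ) :
    ∫ x, (if z < X x then b else c) ∂μ =
      (1 - μ.real {x | X x ≤ z}) * b + μ.real {x | X x ≤ z} * c := by
  have hs : MeasurableSet {x | X x ≤ z} := measurableSet_le hX measurable_const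
  have hpw : (fun x => if z < X x then b else c) =
      {x | X x ≤ z}.piecewise (fun _ => c) (fun _ => b) := by
    ext x
    by_cases h : X x ≤ z <;> simp [h]
  rw [hpw,
    integral_piecewise hs (integrable_const _).integrableOn (integrable_const _).integrableOn,
    setIntegral_const, setIntegral_const, probReal_compl_eq_one_sub hs, smul_eq_mul, smul_eq_mul]
  ring

theorem integral_integral_loss_eq {α : Type*} [MeasurableSpace α] (μ : Measure α)
    [IsProbabilityMeasure μ] {X : α → ℝ} (hX : AEMeasurable X μ)
    (hXmem : ∀ᵐ x ∂μ, X x ∈ Icc (0:ℝ) 1) (co cu : ℝ) {F : Measure ℝ} [IsProbabilityMeasure F]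
    (hF : ∀ᵐ v ∂F, v ∈ Icc (0:ℝ) 1) :
    ∫ x, (∫ v, (co * max (X x - v) 0 + cu * max (v - X x) 0) ∂F) ∂μ =
      ∫ z in Icc (0:ℝ) 1, ((1 - μ.real {x | X x ≤ z}) * (co * cdf F z)
        + μ.real {x | X x ≤ z} * (cu * (1 - cdf F z))) := by
  let g : ℝ → ℝ → ℝ := fun a z => if z < a then co * cdf F z else cu * (1 - cdf F z)
  have hY := hX.measurable_mk
  have hXY := hX.ae_eq_mk
  have hg : Integrable (Function.uncurry fun x z => g (hX.mk X x) z)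
      (μ.prod (volume.restrict (Icc (0:ℝ) 1))) := by
    have hcdf := (cdf F).mono.measurable
    refine Integrable.of_bound ?_ (|co| + |cu|) (ae_of_all _ fun p => ?_)
    · exact (Measurable.ite (measurableSet_lt measurable_snd (hY.comp measurable_fst))
        ((hcdf.comp measurable_snd).const_mul co)
        ((measurable_const.sub (hcdf.comp measurable_snd)).const_mul cu)).aestronglyMeasurable
    · have h0 := cdf_nonneg F p.2
      have h1 := cdf_le_one F p.2
      simp only [g, Function.uncurry, Real.norm_eq_abs]
      split_ifs
      · rw [abs_mul]
        nlinarith [abs_nonneg co, abs_nonneg cu, abs_of_nonneg h0]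
      · rw [abs_mul]
        nlinarith [abs_nonneg co, abs_nonneg cu, abs_of_nonneg (sub_nonneg.2 h1)]
  have hG : ∀ z, μ.real {x | X x ≤ z} = μ.real {x | hX.mk X x ≤ z} := fun z =>
    measureReal_congr (hXY.mono fun x hx => by change (X x ≤ z) = (hX.mk X x ≤ z); rw [hx])
  calc ∫ x, (∫ v, (co * max (X x - v) 0 + cu * max (v - X x) 0) ∂F) ∂μ
      = ∫ x, (∫ z in Icc (0:ℝ) 1, g (hX.mk X x) z) ∂μ := by
        refine integral_congr_ae (hXY.mp (hXmem.mono fun x hx hxY => ?_))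
        dsimp only
        rw [← hxY]
        exact integral_loss_eq_setIntegral_cdf co cu hF hx
    _ = ∫ z in Icc (0:ℝ) 1, ∫ x, g (hX.mk X x) z ∂μ := integral_integral_swap hg
    _ = _ := by
        refine integral_congr_ae (ae_of_all _ fun z => ?_)
        dsimp only [g]
        rw [integral_ite_lt μ hY, hG]

theorem StieltjesFunction.exists_lt_iff_lt (f : StieltjesFunction ℝ) {l u c : ℝ} (hlu : l ≤ u)
    (hc : c ≤ f u) : ∃ a ∈ Icc l u, ∀ z ∈ Icc l u, f z < c ↔ z < a := by
  set A := {z ∈ Icc l u | c ≤ f z}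
  have huA : u ∈ A := ⟨⟨hlu, le_rfl⟩, hc⟩
  have hbdd : BddBelow A := ⟨l, fun z hz => hz.1.1⟩
  have hc_inf : c ≤ f (sInf A) := by
    refine ge_of_tendsto ((f.right_continuous _).mono Ioi_subset_Ici_self)
      (eventually_nhdsWithin_of_forall fun w hw => ?_)
    obtain ⟨w', hw'A, hw'⟩ := exists_lt_of_csInf_lt ⟨u, huA⟩ hw
    exact hw'A.2.trans (f.mono hw'.le)
  refine ⟨sInf A, ⟨le_csInf ⟨u, huA⟩ fun z hz => hz.1.1, csInf_le hbdd huA⟩,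
    fun z hz => ⟨fun hlt => ?_, fun hlt => ?_⟩⟩
  · by_contra! hle
    exact (hc_inf.trans (f.mono hle)).not_gt hlt
  · by_contra! hle
    exact (csInf_le hbdd ⟨hz, hle⟩).not_gt hlt

theorem integrableOn_min_cdf {co cu : ℝ} (hco : 0 ≤ co) (hcu : 0 ≤ cu) (F : Measure ℝ) :
    IntegrableOn (fun z => min (co * cdf F z) (cu * (1 - cdf F z))) (Icc (0:ℝ) 1) := by
  have hcdf := (cdf F).mono.measurable
  refine Integrable.of_bound ((hcdf.const_mul co).min
    ((measurable_const.sub hcdf).const_mul cu)).aestronglyMeasurable co (ae_of_all _ fun z => ?_)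
  have := cdf_nonneg F z
  have := cdf_le_one F z
  rw [Real.norm_eq_abs, abs_le]
  constructor
  · exact le_min (by nlinarith) (by nlinarith)
  · exact (min_le_left _ _).trans (by nlinarith)

theorem sInf_image_integral_loss {co cu : ℝ} (hco : 0 < co) (hcu : 0 < cu) {F : Measure ℝ}
    [IsProbabilityMeasure F] (hF : ∀ᵐ v ∂F, v ∈ Icc (0:ℝ) 1) :
    sInf ((fun a => ∫ v, (co * max (a - v) 0 + cu * max (v - a) 0) ∂F) '' Icc (0:ℝ) 1) =
      ∫ z in Icc (0:ℝ) 1, min (co * cdf F z) (cu * (1 - cdf F z)) := by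
  have hcdf := (cdf F).mono.measurable
  have hF1 : cdf F 1 = 1 := by
    rw [cdf_eq_real, measureReal_def,
      (prob_compl_eq_zero_iff measurableSet_Iic).1 (mem_ae_iff.1 (hF.mono fun v hv => hv.2)),
      ENNReal.toReal_one]
  obtain ⟨a, ha, hthreshold⟩ := (cdf F).exists_lt_iff_lt (c := cu / (co + cu)) zero_le_one
    (by rw [hF1, div_le_one (by positivity)]; linarith)
  have hlower : ∀ b ∈ Icc (0:ℝ) 1, ∫ z in Icc (0:ℝ) 1, min (co * cdf F z) (cu * (1 - cdf F z)) ≤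
      ∫ v, (co * max (b - v) 0 + cu * max (v - b) 0) ∂F := by
    intro b hb
    rw [integral_loss_eq_setIntegral_cdf co cu hF hb]
    have hg : IntegrableOn (fun z => if z < b then co * cdf F z else cu * (1 - cdf F z))
        (Icc (0:ℝ) 1) := by
      refine Integrable.of_bound (Measurable.ite measurableSet_Iio (hcdf.const_mul co)
        ((measurable_const.sub hcdf).const_mul cu)).aestronglyMeasurable (co + cu)
        (ae_of_all _ fun z => ?_)
      have := cdf_nonneg F z
      have := cdf_le_one F z
      rw [Real.norm_eq_abs, abs_le]
      split_ifs <;> constructor <;> nlinarith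
    refine setIntegral_mono_on (integrableOn_min_cdf hco.le hcu.le F) hg measurableSet_Icc
      fun z _ => ?_
    split_ifs
    · exact min_le_left _ _
    · exact min_le_right _ _
  have hattained : ∫ v, (co * max (a - v) 0 + cu * max (v - a) 0) ∂F =
      ∫ z in Icc (0:ℝ) 1, min (co * cdf F z) (cu * (1 - cdf F z)) := by
    rw [integral_loss_eq_setIntegral_cdf co cu hF ha]
    refine setIntegral_congr_fun measurableSet_Icc fun z hz => ?_
    have hz := hthreshold z hz
    rw [lt_div_iff₀ (by positivity)] at hz
    split_ifs with h
    · exact (min_eq_left (by nlinarith [hz.2 h])).symm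
    · exact (min_eq_right (by nlinarith [not_lt.1 (mt hz.1 h)])).symm
  exact IsLeast.csInf_eq ⟨⟨a, ha, hattained⟩, by rintro _ ⟨b, hb, rfl⟩; exact hlower b hb⟩

theorem regret_integrand_eq {co cu q : ℝ} (hq : q = cu / (cu + co)) (hs : 0 < cu + co)
    (g x : ℝ) :
    (1 - g) * (co * x) + g * (cu * (1 - x)) - min (co * x) (cu * (1 - x)) =
      (cu + co) * ((1 - g) * (x - q) + q * (1 - x) - min ((1 - q) * x) (q * (1 - x))) := by
  have hco : (cu + co) * ((1 - q) * x) = co * x := by rw [hq]; field_simp; ring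
  have hcu : (cu + co) * (q * (1 - x)) = cu * (1 - x) := by rw [hq]; field_simp
  rw [mul_sub (cu + co), mul_min_of_nonneg _ _ hs.le, hco, hcu, hq]
  field_simp
  ring

theorem regret_eq_setIntegral {α : Type*} [MeasurableSpace α] (μ : Measure α)
    [IsProbabilityMeasure μ] {X : α → ℝ} (hX : AEMeasurable X μ)
    (hXmem : ∀ᵐ x ∂μ, X x ∈ Icc (0:ℝ) 1) {co cu : ℝ} (hco : 0 < co) (hcu : 0 < cu)
    {F : Measure ℝ} [IsProbabilityMeasure F] (hF : ∀ᵐ v ∂F, v ∈ Icc (0:ℝ) 1) :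
    ∫ x, (∫ v, (co * max (X x - v) 0 + cu * max (v - X x) 0) ∂F) ∂μ
        - sInf ((fun a => ∫ v, (co * max (a - v) 0 + cu * max (v - a) 0) ∂F) '' Icc (0:ℝ) 1) =
      ∫ z in Icc (0:ℝ) 1, ((1 - μ.real {x | X x ≤ z}) * (co * cdf F z)
        + μ.real {x | X x ≤ z} * (cu * (1 - cdf F z))
        - min (co * cdf F z) (cu * (1 - cdf F z))) := by
  have hcdf := (cdf F).mono.measurable
  have hG : Measurable fun z => μ.real {x | X x ≤ z} :=
    Monotone.measurable fun _ _ h => measureReal_mono fun _ hx => le_trans hx h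
  have hmean : IntegrableOn (fun z => (1 - μ.real {x | X x ≤ z}) * (co * cdf F z)
      + μ.real {x | X x ≤ z} * (cu * (1 - cdf F z))) (Icc (0:ℝ) 1) := by
    refine Integrable.of_bound (((measurable_const.sub hG).mul (hcdf.const_mul co)).add
      (hG.mul ((measurable_const.sub hcdf).const_mul cu))).aestronglyMeasurable (co + cu)
      (ae_of_all _ fun z => ?_)
    have hF0 := cdf_nonneg F z
    have hF1 := cdf_le_one F z
    have hG0 : 0 ≤ μ.real {x | X x ≤ z} := measureReal_nonneg
    have hG1 : μ.real {x | X x ≤ z} ≤ 1 := measureReal_le_one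
    have h1 : (1 - μ.real {x | X x ≤ z}) * cdf F z ≤ 1 := mul_le_one₀ (by linarith) hF0 hF1
    have h2 : μ.real {x | X x ≤ z} * (1 - cdf F z) ≤ 1 :=
      mul_le_one₀ hG1 (by linarith) (by linarith)
    rw [Real.norm_eq_abs, abs_le]
    constructor <;> nlinarith [mul_nonneg hG0 (sub_nonneg.2 hF1),
      mul_nonneg (sub_nonneg.2 hG1) hF0, mul_le_mul_of_nonneg_left h1 hco.le,
      mul_le_mul_of_nonneg_left h2 hcu.le]
  rw [integral_integral_loss_eq μ hX hXmem co cu hF, sInf_image_integral_loss hco hcu hF,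
    integral_sub hmean (integrableOn_min_cdf hco.le hcu.le F)]

theorem stmt17 (n : ℕ) (co cu : ℝ) (hco : 0 < co) (hcu : 0 < cu)
    (q : ℝ) (hq : q = cu / (cu + co))
    (π : (Fin n → ℝ) → ℝ) (P : (Fin n → ℝ) → ℝ)
    (hsep : ∀ H : Fin n → Measure ℝ, (∀ i, IsProbabilityMeasure (H i)) →
      (∀ i, H i (Icc (0:ℝ) 1)ᶜ = 0) → ∀ z : ℝ,
        ((Measure.pi H) {y | π y ≤ z}).toReal = P (fun i => (H i (Iic z)).toReal))
    (F : Measure ℝ) [IsProbabilityMeasure F] (hF : F (Icc (0:ℝ) 1)ᶜ = 0)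
    (H : Fin n → Measure ℝ) [∀ i, IsProbabilityMeasure (H i)]
    (hH : ∀ i, H i (Icc (0:ℝ) 1)ᶜ = 0) :
    (∫ y, (∫ v, (co * max (π y - v) 0 + cu * max (v - π y) 0) ∂F) ∂(Measure.pi H))
        - sInf ((fun a => ∫ v, (co * max (a - v) 0 + cu * max (v - a) 0) ∂F)
            '' Icc (0:ℝ) 1)
      = (cu + co) * ∫ z in (0:ℝ)..1,
          ((1 - P (fun i => (H i (Iic z)).toReal)) * ((F (Iic z)).toReal - q)
            + q * (1 - (F (Iic z)).toReal)
            - min ((1 - q) * (F (Iic z)).toReal) (q * (1 - (F (Iic z)).toReal))) := by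
  have hHae : ∀ i, ∀ᵐ x ∂H i, x ∈ Icc (0:ℝ) 1 := fun i => mem_ae_iff.2 (hH i)
  rw [regret_eq_setIntegral (Measure.pi H) (IsSeparablePolicy.aemeasurable hsep H hHae)
      (IsSeparablePolicy.ae_mem_Icc hsep H hHae) hco hcu (mem_ae_iff.2 hF),
    intervalIntegral.integral_of_le zero_le_one, ← integral_Icc_eq_integral_Ioc,
    ← integral_const_mul]
  refine setIntegral_congr_fun measurableSet_Icc fun z _ => ?_
  rw [← hsep H (fun _ => inferInstance) hH z, cdf_eq_real]
  exact regret_integrand_eq hq (by positivity) _ _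
end
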